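/- arXiv:1807.06887 — 5 statements merged into one kernel-verified Lean document; each statement's English description precedes it below -/
import Mathlib

section
/- Fix reals a, b > 0, k > 0, exponents 1 < q < p, l > p(k+1), and λ > 0. Let A > 0 and F, G ∈ ℝ with F > 0 and G ≤ 0, and define φ : (0,∞) → ℝ by φ(t) = (a/(p(k+1)))·A^{k+1}·t^{p(k+1)} + (b/p)·A·t^p − (λ/q)·F·t^q − (1/l)·G·t^l. Then there exists a unique t₁ > 0 with φ'(t₁) = 0; moreover φ'(t) < 0 for 0 < t < t₁ and φ'(t) > 0 for t > t₁, φ''(t₁) > 0, φ(t₁) = inf_{t>0} φ(t) < 0, and φ(t) → +∞ as t → +∞. -/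
/-!
Write `φ(t) = c₁ t^α + c₂ t^β - c₃ t^γ - c₄ t^δ` with `c₁, c₃ > 0`, `c₂ ≥ 0 ≥ c₄` and
`0 < γ < α, β, δ`. For `t > 0` one has `φ'(t) = t^(γ-1) g(t)`, where the function
`g(t) = c₁α t^(α-γ) + c₂β t^(β-γ) - c₃γ - c₄δ t^(δ-γ)` (`reducedDeriv`) is continuous on
`[0, ∞)`, has a positive derivative on `(0, ∞)`, starts at `g(0) = -c₃γ < 0` and tends to `+∞`.
Hence `g` has exactly one positive zero `t₁`, `φ` decreases on `[0, t₁]` and increases on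
`[t₁, ∞)`, so `φ(t₁) < φ(0) = 0` is the minimum, and `φ''(t₁) = t₁^(γ-1) g'(t₁) > 0`.
-/

/-- The fibering map of the Euler functional, as a scalar function of the
parameters `A = ‖u‖_{E_p}^p`, `F = ∫ f|u|^q dμ`, `G = ∫ g|u|^l dμ`. -/
noncomputable def phi (a b k p q l lam A F G t : ℝ) : ℝ :=
  a / (p * (k + 1)) * A ^ (k + 1) * t ^ (p * (k + 1))
    + b / p * A * t ^ p - lam / q * F * t ^ q - 1 / l * G * t ^ l

open Filter Set

noncomputable def rpowPoly (c₁ c₂ c₃ c₄ α β γ δ t : ℝ) : ℝ :=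
  c₁ * t ^ α + c₂ * t ^ β - c₃ * t ^ γ - c₄ * t ^ δ

noncomputable def reducedDeriv (c₁ c₂ c₃ c₄ α β γ δ : ℝ) : ℝ → ℝ :=
  rpowPoly (c₁ * α) (c₂ * β) (c₃ * γ) (c₄ * δ) (α - γ) (β - γ) 0 (δ - γ)

section RpowPoly

variable {c₁ c₂ c₃ c₄ α β γ δ t : ℝ}

lemma continuous_rpowPoly (hα : 0 ≤ α) (hβ : 0 ≤ β) (hγ : 0 ≤ γ) (hδ : 0 ≤ δ) :
    Continuous (rpowPoly c₁ c₂ c₃ c₄ α β γ δ) := by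
  unfold rpowPoly
  have := Real.continuous_rpow_const hα
  have := Real.continuous_rpow_const hβ
  have := Real.continuous_rpow_const hγ
  have := Real.continuous_rpow_const hδ
  fun_prop

lemma hasDerivAt_rpowPoly (ht : t ≠ 0) :
    HasDerivAt (rpowPoly c₁ c₂ c₃ c₄ α β γ δ)
      (rpowPoly (c₁ * α) (c₂ * β) (c₃ * γ) (c₄ * δ) (α - 1) (β - 1) (γ - 1) (δ - 1) t) t := by
  have hpow (e : ℝ) := Real.hasDerivAt_rpow_const (p := e) (Or.inl ht)
  refine ((((hpow α).const_mul c₁).add ((hpow β).const_mul c₂)).sub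
    ((hpow γ).const_mul c₃)).sub ((hpow δ).const_mul c₄) |>.congr_deriv ?_
  simp only [rpowPoly]
  ring

lemma rpowPoly_pos (h₁ : 0 < c₁) (h₂ : 0 ≤ c₂) (h₃ : c₃ ≤ 0) (h₄ : c₄ ≤ 0) (ht : 0 < t) :
    0 < rpowPoly c₁ c₂ c₃ c₄ α β γ δ t := by
  have := Real.rpow_pos_of_pos ht α
  have := Real.rpow_nonneg ht.le β
  have := Real.rpow_nonneg ht.le γ
  have := Real.rpow_nonneg ht.le δ
  unfold rpowPoly
  nlinarith

lemma rpow_mul_rpowPoly (ht : 0 < t) (r : ℝ) :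
    t ^ r * rpowPoly c₁ c₂ c₃ c₄ α β γ δ t
      = rpowPoly c₁ c₂ c₃ c₄ (α + r) (β + r) (γ + r) (δ + r) t := by
  simp only [rpowPoly, Real.rpow_add ht]
  ring

lemma tendsto_rpowPoly_atTop (h₁ : 0 < c₁) (hα : 0 < α) (h₂ : 0 ≤ c₂) (h₄ : c₄ ≤ 0)
    (hγα : γ < α) : Tendsto (rpowPoly c₁ c₂ c₃ c₄ α β γ δ) atTop atTop := by
  have hlead : Tendsto (fun t : ℝ ↦ t ^ α * (c₁ - c₃ * t ^ (γ - α))) atTop atTop := by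
    refine (tendsto_rpow_atTop hα).atTop_mul_pos h₁ ?_
    simpa using (tendsto_rpow_neg_atTop (sub_pos.2 hγα)).const_mul c₃ |>.const_sub c₁
  refine tendsto_atTop_mono' atTop ?_ hlead
  filter_upwards [eventually_gt_atTop 0] with t ht
  have := Real.rpow_nonneg ht.le β
  have := Real.rpow_nonneg ht.le δ
  have hsplit : t ^ α * (c₁ - c₃ * t ^ (γ - α)) = c₁ * t ^ α - c₃ * t ^ γ := by
    rw [mul_sub, ← mul_assoc, mul_comm (t ^ α) c₃, mul_assoc, ← Real.rpow_add ht]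
    ring_nf
  rw [hsplit, rpowPoly]
  nlinarith

lemma deriv_rpowPoly_pos (h₁ : 0 < c₁) (hα : 0 < α) (h₂ : 0 ≤ c₂) (hβ : 0 ≤ β) (h₄ : c₄ ≤ 0)
    (hδ : 0 ≤ δ) (ht : 0 < t) : 0 < deriv (rpowPoly c₁ c₂ c₃ c₄ α β 0 δ) t := by
  rw [(hasDerivAt_rpowPoly ht.ne').deriv]
  exact rpowPoly_pos (by positivity) (by positivity) (by simp)
    (mul_nonpos_of_nonpos_of_nonneg h₄ hδ) ht

lemma strictMonoOn_rpowPoly (h₁ : 0 < c₁) (hα : 0 < α) (h₂ : 0 ≤ c₂) (hβ : 0 ≤ β)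
    (h₄ : c₄ ≤ 0) (hδ : 0 ≤ δ) : StrictMonoOn (rpowPoly c₁ c₂ c₃ c₄ α β 0 δ) (Ici 0) := by
  refine strictMonoOn_of_deriv_pos (convex_Ici 0)
    (continuous_rpowPoly hα.le hβ le_rfl hδ).continuousOn fun t ht ↦ ?_
  rw [interior_Ici] at ht
  exact deriv_rpowPoly_pos h₁ hα h₂ hβ h₄ hδ ht

lemma deriv_rpowPoly_eq (ht : 0 < t) :
    deriv (rpowPoly c₁ c₂ c₃ c₄ α β γ δ) t = t ^ (γ - 1) * reducedDeriv c₁ c₂ c₃ c₄ α β γ δ t := by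
  rw [(hasDerivAt_rpowPoly ht.ne').deriv, reducedDeriv, rpow_mul_rpowPoly ht]
  congr 1 <;> ring

end RpowPoly

section ReducedDeriv

variable {c₁ c₂ c₃ c₄ α β γ δ t : ℝ}

lemma strictMonoOn_reducedDeriv (h₁ : 0 < c₁) (h₂ : 0 ≤ c₂) (h₄ : c₄ ≤ 0) (hγ : 0 ≤ γ)
    (hγα : γ < α) (hγβ : γ ≤ β) (hγδ : γ ≤ δ) :
    StrictMonoOn (reducedDeriv c₁ c₂ c₃ c₄ α β γ δ) (Ici 0) :=
  strictMonoOn_rpowPoly (mul_pos h₁ (by linarith)) (by linarith) (mul_nonneg h₂ (by linarith))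
    (by linarith) (mul_nonpos_of_nonpos_of_nonneg h₄ (by linarith)) (by linarith)

lemma exists_pos_reducedDeriv_eq_zero (h₁ : 0 < c₁) (h₂ : 0 ≤ c₂) (h₃ : 0 < c₃) (h₄ : c₄ ≤ 0)
    (hγ : 0 < γ) (hγα : γ < α) (hγβ : γ < β) (hγδ : γ < δ) :
    ∃ t₁, 0 < t₁ ∧ reducedDeriv c₁ c₂ c₃ c₄ α β γ δ t₁ = 0 := by
  have hα : 0 < α - γ := sub_pos.2 hγα
  have hβ : 0 < β - γ := sub_pos.2 hγβ
  have hδ : 0 < δ - γ := sub_pos.2 hγδ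
  have hcont : Continuous (reducedDeriv c₁ c₂ c₃ c₄ α β γ δ) :=
    continuous_rpowPoly hα.le hβ.le le_rfl hδ.le
  have htop : Tendsto (reducedDeriv c₁ c₂ c₃ c₄ α β γ δ) atTop atTop :=
    tendsto_rpowPoly_atTop (mul_pos h₁ (by linarith)) hα (mul_nonneg h₂ (by linarith))
      (mul_nonpos_of_nonpos_of_nonneg h₄ (by linarith)) hα
  have hzero : reducedDeriv c₁ c₂ c₃ c₄ α β γ δ 0 < 0 := by
    simpa [reducedDeriv, rpowPoly, Real.zero_rpow, hα.ne', hβ.ne', hδ.ne'] using mul_pos h₃ hγ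
  exact intermediate_value_Ioi hcont.continuousOn htop hzero

lemma deriv_deriv_rpowPoly_pos (h₁ : 0 < c₁) (h₂ : 0 ≤ c₂) (h₄ : c₄ ≤ 0) (hγ : 0 ≤ γ)
    (hγα : γ < α) (hγβ : γ ≤ β) (hγδ : γ ≤ δ) (ht : 0 < t)
    (hg : reducedDeriv c₁ c₂ c₃ c₄ α β γ δ t = 0) :
    0 < deriv (deriv (rpowPoly c₁ c₂ c₃ c₄ α β γ δ)) t := by
  have hfactor : deriv (rpowPoly c₁ c₂ c₃ c₄ α β γ δ)
      =ᶠ[nhds t] fun s ↦ s ^ (γ - 1) * reducedDeriv c₁ c₂ c₃ c₄ α β γ δ s :=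
    eventually_of_mem (Ioi_mem_nhds ht) fun s hs ↦ deriv_rpowPoly_eq hs
  have hg' : 0 < deriv (reducedDeriv c₁ c₂ c₃ c₄ α β γ δ) t :=
    deriv_rpowPoly_pos (mul_pos h₁ (by linarith)) (by linarith) (mul_nonneg h₂ (by linarith))
      (by linarith) (mul_nonpos_of_nonpos_of_nonneg h₄ (by linarith)) (by linarith) ht
  have hprod : HasDerivAt (fun s ↦ s ^ (γ - 1) * reducedDeriv c₁ c₂ c₃ c₄ α β γ δ s) _ t :=
    (Real.hasDerivAt_rpow_const (Or.inl ht.ne')).mul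
      (differentiableAt_of_deriv_ne_zero hg'.ne').hasDerivAt
  rw [hfactor.deriv_eq, hprod.deriv, hg, mul_zero, zero_add]
  exact mul_pos (Real.rpow_pos_of_pos ht _) hg'

lemma exists_sign_change_deriv_rpowPoly (h₁ : 0 < c₁) (h₂ : 0 ≤ c₂) (h₃ : 0 < c₃) (h₄ : c₄ ≤ 0)
    (hγ : 0 < γ) (hγα : γ < α) (hγβ : γ < β) (hγδ : γ < δ) :
    ∃ t₁, 0 < t₁ ∧ reducedDeriv c₁ c₂ c₃ c₄ α β γ δ t₁ = 0 ∧
      (∀ t, 0 < t → deriv (rpowPoly c₁ c₂ c₃ c₄ α β γ δ) t = 0 → t = t₁) ∧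
      (∀ t, 0 < t → t < t₁ → deriv (rpowPoly c₁ c₂ c₃ c₄ α β γ δ) t < 0) ∧
      (∀ t, t₁ < t → 0 < deriv (rpowPoly c₁ c₂ c₃ c₄ α β γ δ) t) := by
  obtain ⟨t₁, ht₁, hg₁⟩ := exists_pos_reducedDeriv_eq_zero h₁ h₂ h₃ h₄ hγ hγα hγβ hγδ
  have hmono := strictMonoOn_reducedDeriv (c₃ := c₃) h₁ h₂ h₄ hγ.le hγα hγβ.le hγδ.le
  refine ⟨t₁, ht₁, hg₁, fun t ht h0 ↦ ?_, fun t ht htt ↦ ?_, fun t htt ↦ ?_⟩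
  · rw [deriv_rpowPoly_eq ht, mul_eq_zero] at h0
    exact hmono.injOn ht.le ht₁.le
      ((h0.resolve_left (Real.rpow_pos_of_pos ht _).ne').trans hg₁.symm)
  · rw [deriv_rpowPoly_eq ht]
    exact mul_neg_of_pos_of_neg (Real.rpow_pos_of_pos ht _) (hg₁ ▸ hmono ht.le ht₁.le htt)
  · have ht := ht₁.trans htt
    rw [deriv_rpowPoly_eq ht]
    exact mul_pos (Real.rpow_pos_of_pos ht _) (hg₁ ▸ hmono ht₁.le ht.le htt)

end ReducedDeriv

lemma isMinOn_Ici_of_deriv_neg_of_deriv_pos {f : ℝ → ℝ} {a t₁ : ℝ} (ht₁ : a < t₁)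
    (hf : ContinuousOn f (Ici a)) (hneg : ∀ t ∈ Ioo a t₁, deriv f t < 0)
    (hpos : ∀ t, t₁ < t → 0 < deriv f t) : f t₁ < f a ∧ IsMinOn f (Ici a) t₁ := by
  have hanti : StrictAntiOn f (Icc a t₁) :=
    strictAntiOn_of_deriv_neg (convex_Icc a t₁) (hf.mono Icc_subset_Ici_self)
      (by rwa [interior_Icc])
  have hmono : StrictMonoOn f (Ici t₁) :=
    strictMonoOn_of_deriv_pos (convex_Ici t₁) (hf.mono (Ici_subset_Ici.2 ht₁.le))
      (by simpa only [interior_Ici])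
  refine ⟨hanti ⟨le_rfl, ht₁.le⟩ ⟨ht₁.le, le_rfl⟩ ht₁, fun t (ht : a ≤ t) ↦ ?_⟩
  rcases le_total t t₁ with htt | htt
  · exact hanti.antitoneOn ⟨ht, htt⟩ ⟨ht₁.le, le_rfl⟩ htt
  · exact hmono.monotoneOn self_mem_Ici htt htt

/-- Case II of the fibering map analysis: if `F > 0` and `G ≤ 0`,
the fibering map has a unique positive critical point `t₁`, which is a strict
local (indeed global on `(0,∞)`) minimum with negative value, and `φ(t) → +∞`
as `t → +∞`. -/
theorem stmt_4 (a b k p q l lam A F G : ℝ)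
    (ha : 0 < a) (hb : 0 < b) (hk : 0 < k)
    (hq : 1 < q) (hqp : q < p) (hl : p * (k + 1) < l) (hlam : 0 < lam)
    (hA : 0 < A) (hF : 0 < F) (hG : G ≤ 0) :
    ∃ t₁ : ℝ, 0 < t₁ ∧ deriv (phi a b k p q l lam A F G) t₁ = 0 ∧
      (∀ t : ℝ, 0 < t → deriv (phi a b k p q l lam A F G) t = 0 → t = t₁) ∧
      (∀ t : ℝ, 0 < t → t < t₁ → deriv (phi a b k p q l lam A F G) t < 0) ∧
      (∀ t : ℝ, t₁ < t → 0 < deriv (phi a b k p q l lam A F G) t) ∧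
      0 < deriv (deriv (phi a b k p q l lam A F G)) t₁ ∧
      (∀ t : ℝ, 0 < t →
        phi a b k p q l lam A F G t₁ ≤ phi a b k p q l lam A F G t) ∧
      phi a b k p q l lam A F G t₁ < 0 ∧
      Filter.Tendsto (phi a b k p q l lam A F G) Filter.atTop Filter.atTop := by
  have hq₀ : 0 < q := by linarith
  have hp₀ : 0 < p := hq₀.trans hqp
  have hqα : q < p * (k + 1) := by nlinarith
  have hql : q < l := hqα.trans hl
  have hl₀ : 0 < l := hq₀.trans hql
  have h₁ : 0 < a / (p * (k + 1)) * A ^ (k + 1) := by positivity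
  have h₂ : 0 < b / p * A := by positivity
  have h₃ : 0 < lam / q * F := by positivity
  have h₄ : 1 / l * G ≤ 0 := mul_nonpos_of_nonneg_of_nonpos (by positivity) hG
  have hφ : phi a b k p q l lam A F G = rpowPoly (a / (p * (k + 1)) * A ^ (k + 1)) (b / p * A)
      (lam / q * F) (1 / l * G) (p * (k + 1)) p q l := rfl
  rw [hφ]
  obtain ⟨t₁, ht₁, hg₁, huniq, hneg, hpos⟩ :=
    exists_sign_change_deriv_rpowPoly h₁ h₂.le h₃ h₄ hq₀ hqα hqp hql
  obtain ⟨hlt, hmin⟩ := isMinOn_Ici_of_deriv_neg_of_deriv_pos ht₁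
    (continuous_rpowPoly (by positivity) hp₀.le hq₀.le hl₀.le).continuousOn
    (fun t ht ↦ hneg t ht.1 ht.2) hpos
  refine ⟨t₁, ht₁, by rw [deriv_rpowPoly_eq ht₁, hg₁, mul_zero], huniq, hneg, hpos,
    deriv_deriv_rpowPoly_pos h₁ h₂.le h₄ hq₀.le hqα hqp.le hql.le ht₁ hg₁,
    fun t ht ↦ hmin ht.le, ?_, tendsto_rpowPoly_atTop h₁ (by linarith) h₂.le h₄ hqα⟩
  simpa [rpowPoly, Real.zero_rpow, hp₀.ne', hq₀.ne', (hq₀.trans hqα).ne', hl₀.ne']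
    using hlt
end

section
/- Fix reals a, b > 0, k > 0, exponents 1 < q < p, l > p(k+1), and λ > 0. Let A > 0 and F, G ∈ ℝ with F ≤ 0 and G > 0, and define φ : (0,∞) → ℝ by φ(t) = (a/(p(k+1)))·A^{k+1}·t^{p(k+1)} + (b/p)·A·t^p − (λ/q)·F·t^q − (1/l)·G·t^l. Then there exists a unique t₂ > 0 with φ'(t₂) = 0; moreover φ'(t) > 0 for 0 < t < t₂ and φ'(t) < 0 for t > t₂, φ''(t₂) < 0, φ(t₂) = sup_{t>0} φ(t) > 0, and φ(t) → −∞ as t → +∞. -/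
open Real Filter Set Topology

noncomputable def psi (a b k p q l lam A F G t : ℝ) : ℝ :=
  a * A ^ (k + 1) * t ^ (p * (k + 1) - l) + b * A * t ^ (p - l) - lam * F * t ^ (q - l) - G

lemma rpow_eq_rpow_mul_rpow_sub {t : ℝ} (ht : 0 < t) (x y : ℝ) : t ^ x = t ^ y * t ^ (x - y) := by
  rw [← rpow_add ht, add_sub_cancel]

lemma tendsto_const_mul_rpow_atTop_of_neg (c : ℝ) {e : ℝ} (he : e < 0) :
    Tendsto (fun t : ℝ => c * t ^ e) atTop (𝓝 0) := by
  simpa using (tendsto_rpow_neg_atTop (neg_pos.2 he)).const_mul c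

lemma isMaxOn_Ioi_of_deriv_pos_of_deriv_neg {f : ℝ → ℝ} {t₀ : ℝ} (ht₀ : 0 < t₀)
    (hf : ∀ t, 0 < t → DifferentiableAt ℝ f t)
    (hpos : ∀ t, 0 < t → t < t₀ → 0 < deriv f t) (hneg : ∀ t, t₀ < t → deriv f t < 0) :
    IsMaxOn f (Ioi 0) t₀ := by
  have hcont : ContinuousOn f (Ioi 0) := fun t ht => (hf t ht).continuousAt.continuousWithinAt
  have hmono : StrictMonoOn f (Ioc 0 t₀) :=
    strictMonoOn_of_deriv_pos (convex_Ioc 0 t₀) (hcont.mono Ioc_subset_Ioi_self)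
      (by simpa only [interior_Ioc] using fun t ht => hpos t ht.1 ht.2)
  have hanti : StrictAntiOn f (Ici t₀) :=
    strictAntiOn_of_deriv_neg (convex_Ici t₀) (hcont.mono fun t ht => ht₀.trans_le ht)
      (by rw [interior_Ici]; exact hneg)
  intro t (ht : 0 < t)
  rcases le_total t t₀ with h | h
  · exact hmono.monotoneOn ⟨ht, h⟩ ⟨ht₀, le_rfl⟩ h
  · exact hanti.antitoneOn (mem_Ici.2 le_rfl) h h

section FiberingMap

variable (a b k p q l lam A F G : ℝ)

lemma hasDerivAt_phi (hp : p ≠ 0) (hk : k + 1 ≠ 0) (hq : q ≠ 0) (hl : l ≠ 0) {t : ℝ}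
    (ht : 0 < t) :
    HasDerivAt (phi a b k p q l lam A F G) (t ^ (l - 1) * psi a b k p q l lam A F G t) t := by
  have hd : ∀ e : ℝ, HasDerivAt (fun t : ℝ => t ^ e) (e * t ^ (e - 1)) t :=
    fun e => hasDerivAt_rpow_const (Or.inl ht.ne')
  refine ((((hd (p * (k + 1))).const_mul (a / (p * (k + 1)) * A ^ (k + 1))).add
    ((hd p).const_mul (b / p * A))).sub ((hd q).const_mul (lam / q * F))).sub
    ((hd l).const_mul (1 / l * G)) |>.congr_deriv ?_
  simp only [psi]
  rw [rpow_eq_rpow_mul_rpow_sub ht (p * (k + 1) - 1) (l - 1),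
    rpow_eq_rpow_mul_rpow_sub ht (p - 1) (l - 1), rpow_eq_rpow_mul_rpow_sub ht (q - 1) (l - 1)]
  field_simp
  simp only [sub_sub_sub_cancel_right]

lemma hasDerivAt_psi {t : ℝ} (ht : 0 < t) :
    HasDerivAt (psi a b k p q l lam A F G)
      (a * A ^ (k + 1) * ((p * (k + 1) - l) * t ^ (p * (k + 1) - l - 1))
        + b * A * ((p - l) * t ^ (p - l - 1)) - lam * F * ((q - l) * t ^ (q - l - 1))) t := by
  have hd : ∀ e : ℝ, HasDerivAt (fun t : ℝ => t ^ e) (e * t ^ (e - 1)) t :=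
    fun e => hasDerivAt_rpow_const (Or.inl ht.ne')
  exact ((((hd (p * (k + 1) - l)).const_mul (a * A ^ (k + 1))).add
    ((hd (p - l)).const_mul (b * A))).sub ((hd (q - l)).const_mul (lam * F))).sub_const G

lemma continuousOn_psi : ContinuousOn (psi a b k p q l lam A F G) (Ioi 0) :=
  fun _ ht => (hasDerivAt_psi a b k p q l lam A F G ht).continuousAt.continuousWithinAt

lemma phi_sub_rpow_mul_psi {t : ℝ} (ht : 0 < t) :
    phi a b k p q l lam A F G t - t ^ l / l * psi a b k p q l lam A F G t
      = a * A ^ (k + 1) * (1 / (p * (k + 1)) - 1 / l) * t ^ (p * (k + 1))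
        + b * A * (1 / p - 1 / l) * t ^ p - lam * F * (1 / q - 1 / l) * t ^ q := by
  simp only [phi, psi]
  rw [rpow_eq_rpow_mul_rpow_sub ht (p * (k + 1)) l, rpow_eq_rpow_mul_rpow_sub ht p l,
    rpow_eq_rpow_mul_rpow_sub ht q l]
  ring

variable {a b k p q l lam A F G}

lemma deriv_psi_neg (ha : 0 ≤ a) (hb : 0 < b) (hA : 0 < A) (hlamF : lam * F ≤ 0)
    (hα : p * (k + 1) < l) (hp : p < l) (hq : q < l) {t : ℝ} (ht : 0 < t) :
    deriv (psi a b k p q l lam A F G) t < 0 := by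
  rw [(hasDerivAt_psi a b k p q l lam A F G ht).deriv]
  have h₁ : a * A ^ (k + 1) * ((p * (k + 1) - l) * t ^ (p * (k + 1) - l - 1)) ≤ 0 :=
    mul_nonpos_of_nonneg_of_nonpos (by positivity)
      (mul_nonpos_of_nonpos_of_nonneg (by linarith) (by positivity))
  have h₂ : b * A * ((p - l) * t ^ (p - l - 1)) < 0 :=
    mul_neg_of_pos_of_neg (by positivity) (mul_neg_of_neg_of_pos (by linarith) (by positivity))
  have h₃ : 0 ≤ lam * F * ((q - l) * t ^ (q - l - 1)) :=
    mul_nonneg_of_nonpos_of_nonpos hlamF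
      (mul_nonpos_of_nonpos_of_nonneg (by linarith) (by positivity))
  linarith

lemma strictAntiOn_psi (ha : 0 ≤ a) (hb : 0 < b) (hA : 0 < A) (hlamF : lam * F ≤ 0)
    (hα : p * (k + 1) < l) (hp : p < l) (hq : q < l) :
    StrictAntiOn (psi a b k p q l lam A F G) (Ioi 0) :=
  strictAntiOn_of_deriv_neg (convex_Ioi 0) (continuousOn_psi a b k p q l lam A F G)
    (by rw [interior_Ioi]; exact fun t ht => deriv_psi_neg ha hb hA hlamF hα hp hq ht)

lemma tendsto_psi_nhdsGT_zero (ha : 0 ≤ a) (hb : 0 < b) (hA : 0 < A) (hlamF : lam * F ≤ 0)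
    (hp : p < l) : Tendsto (psi a b k p q l lam A F G) (𝓝[>] 0) atTop := by
  have hlim : Tendsto (fun t : ℝ => b * A * t ^ (p - l) - G) (𝓝[>] 0) atTop :=
    tendsto_atTop_add_const_right _ _
      ((tendsto_rpow_neg_nhdsGT_zero (by linarith)).const_mul_atTop (by positivity))
  refine tendsto_atTop_mono' _ ?_ hlim
  filter_upwards [self_mem_nhdsWithin] with t (ht : 0 < t)
  have h₁ : 0 ≤ a * A ^ (k + 1) * t ^ (p * (k + 1) - l) := by positivity
  have h₃ : lam * F * t ^ (q - l) ≤ 0 := mul_nonpos_of_nonpos_of_nonneg hlamF (by positivity)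
  simp only [psi]
  linarith

lemma tendsto_psi_atTop (hα : p * (k + 1) < l) (hp : p < l) (hq : q < l) :
    Tendsto (psi a b k p q l lam A F G) atTop (𝓝 (-G)) := by
  have h := (((tendsto_const_mul_rpow_atTop_of_neg (a * A ^ (k + 1)) (sub_neg.2 hα)).add
    (tendsto_const_mul_rpow_atTop_of_neg (b * A) (sub_neg.2 hp))).sub
    (tendsto_const_mul_rpow_atTop_of_neg (lam * F) (sub_neg.2 hq))).sub_const G
  rw [add_zero, sub_zero, zero_sub] at h
  exact h

lemma tendsto_phi_atTop (hl : 0 < l) (hG : 0 < G) (hα : p * (k + 1) < l) (hp : p < l)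
    (hq : q < l) : Tendsto (phi a b k p q l lam A F G) atTop atBot := by
  have hlim : Tendsto (fun t : ℝ => a / (p * (k + 1)) * A ^ (k + 1) * t ^ (p * (k + 1) - l)
      + b / p * A * t ^ (p - l) - lam / q * F * t ^ (q - l) - 1 / l * G) atTop
      (𝓝 (-(1 / l * G))) := by
    simpa using ((((tendsto_const_mul_rpow_atTop_of_neg _ (sub_neg.2 hα)).add
      (tendsto_const_mul_rpow_atTop_of_neg _ (sub_neg.2 hp))).sub
      (tendsto_const_mul_rpow_atTop_of_neg _ (sub_neg.2 hq))).sub_const (1 / l * G))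
  refine ((tendsto_rpow_atTop hl).atTop_mul_neg (neg_neg_of_pos (by positivity)) hlim).congr' ?_
  filter_upwards [eventually_gt_atTop 0] with t ht
  simp only [phi]
  rw [rpow_eq_rpow_mul_rpow_sub ht (p * (k + 1)) l, rpow_eq_rpow_mul_rpow_sub ht p l,
    rpow_eq_rpow_mul_rpow_sub ht q l]
  ring

lemma phi_pos_of_psi_eq_zero (ha : 0 ≤ a) (hb : 0 < b) (hA : 0 < A) (hlamF : lam * F ≤ 0)
    (hp : 0 < p) (hk : 0 < k + 1) (hq : 0 < q) (hα : p * (k + 1) < l) (hpl : p < l)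
    (hql : q < l) {t : ℝ} (ht : 0 < t) (hψ : psi a b k p q l lam A F G t = 0) :
    0 < phi a b k p q l lam A F G t := by
  have hsub := phi_sub_rpow_mul_psi a b k p q l lam A F G ht
  rw [hψ, mul_zero, sub_zero] at hsub
  have hl : 0 < l := hp.trans hpl
  have h₁ : 0 ≤ a * A ^ (k + 1) * (1 / (p * (k + 1)) - 1 / l) * t ^ (p * (k + 1)) :=
    mul_nonneg (mul_nonneg (by positivity)
      (sub_nonneg.2 (one_div_le_one_div_of_le (by positivity) hα.le))) (by positivity)
  have h₂ : 0 < b * A * (1 / p - 1 / l) * t ^ p :=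
    mul_pos (mul_pos (by positivity) (sub_pos.2 (one_div_lt_one_div_of_lt hp hpl)))
      (by positivity)
  have h₃ : lam * F * (1 / q - 1 / l) * t ^ q ≤ 0 :=
    mul_nonpos_of_nonpos_of_nonneg
      (mul_nonpos_of_nonpos_of_nonneg hlamF (sub_nonneg.2 (one_div_le_one_div_of_le hq hql.le)))
      (by positivity)
  linarith

lemma deriv_deriv_phi_neg (ha : 0 ≤ a) (hb : 0 < b) (hA : 0 < A) (hlamF : lam * F ≤ 0)
    (hp : 0 < p) (hk : 0 < k + 1) (hq : 0 < q) (hα : p * (k + 1) < l) (hpl : p < l)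
    (hql : q < l) {t : ℝ} (ht : 0 < t) (hψ : psi a b k p q l lam A F G t = 0) :
    deriv (deriv (phi a b k p q l lam A F G)) t < 0 := by
  have hderiv : deriv (phi a b k p q l lam A F G)
      =ᶠ[𝓝 t] fun s => s ^ (l - 1) * psi a b k p q l lam A F G s := by
    filter_upwards [Ioi_mem_nhds ht] with s (hs : 0 < s)
    exact (hasDerivAt_phi a b k p q l lam A F G hp.ne' hk.ne' hq.ne' (hp.trans hpl).ne' hs).deriv
  have hψ' := ((hasDerivAt_psi a b k p q l lam A F G ht).differentiableAt).hasDerivAt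
  have hprod : HasDerivAt (fun s => s ^ (l - 1) * psi a b k p q l lam A F G s)
      ((l - 1) * t ^ (l - 1 - 1) * psi a b k p q l lam A F G t
        + t ^ (l - 1) * deriv (psi a b k p q l lam A F G) t) t :=
    (hasDerivAt_rpow_const (Or.inl ht.ne')).mul hψ'
  rw [hderiv.deriv_eq, hprod.deriv, hψ, mul_zero, zero_add]
  exact mul_neg_of_pos_of_neg (by positivity) (deriv_psi_neg ha hb hA hlamF hα hpl hql ht)

end FiberingMap

/-- Case III of the fibering map analysis: if `F ≤ 0` and `G > 0`,
the fibering map has a unique positive critical point `t₂`, which is a strict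
local (indeed global on `(0,∞)`) maximum with positive value, and `φ(t) → −∞`
as `t → +∞`. -/
theorem stmt_5 (a b k p q l lam A F G : ℝ)
    (ha : 0 < a) (hb : 0 < b) (hk : 0 < k)
    (hq : 1 < q) (hqp : q < p) (hl : p * (k + 1) < l) (hlam : 0 < lam)
    (hA : 0 < A) (hF : F ≤ 0) (hG : 0 < G) :
    ∃ t₂ : ℝ, 0 < t₂ ∧ deriv (phi a b k p q l lam A F G) t₂ = 0 ∧
      (∀ t : ℝ, 0 < t → deriv (phi a b k p q l lam A F G) t = 0 → t = t₂) ∧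
      (∀ t : ℝ, 0 < t → t < t₂ → 0 < deriv (phi a b k p q l lam A F G) t) ∧
      (∀ t : ℝ, t₂ < t → deriv (phi a b k p q l lam A F G) t < 0) ∧
      deriv (deriv (phi a b k p q l lam A F G)) t₂ < 0 ∧
      (∀ t : ℝ, 0 < t →
        phi a b k p q l lam A F G t ≤ phi a b k p q l lam A F G t₂) ∧
      0 < phi a b k p q l lam A F G t₂ ∧
      Filter.Tendsto (phi a b k p q l lam A F G) Filter.atTop Filter.atBot := by
  have hp : 0 < p := by linarith
  have hk1 : 0 < k + 1 := by linarith
  have hpl : p < l := (lt_mul_right hp (by linarith)).trans hl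
  have hl0 : 0 < l := hp.trans hpl
  have hql : q < l := hqp.trans hpl
  have hq0 : 0 < q := by linarith
  have hlamF : lam * F ≤ 0 := mul_nonpos_of_nonneg_of_nonpos hlam.le hF
  have hderiv (t : ℝ) (ht : 0 < t) := hasDerivAt_phi a b k p q l lam A F G hp.ne' hk1.ne'
    hq0.ne' hl0.ne' ht
  have hanti := strictAntiOn_psi (G := G) ha.le hb hA hlamF hl hpl hql
  obtain ⟨s, hψs, hs⟩ := ((tendsto_psi_nhdsGT_zero (k := k) (q := q) (G := G) ha.le hb hA hlamF
    hpl).eventually_gt_atTop 0).and self_mem_nhdsWithin |>.exists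
  obtain ⟨T, hψT, hT⟩ := ((tendsto_psi_atTop (a := a) (b := b) (lam := lam) (A := A) (F := F)
    hl hpl hql).eventually_lt_const (neg_neg_of_pos hG)).and (eventually_gt_atTop 0) |>.exists
  obtain ⟨t₂, ht₂ : 0 < t₂, hψt₂⟩ := isPreconnected_Ioi.intermediate_value hT hs
    (continuousOn_psi a b k p q l lam A F G) ⟨hψT.le, hψs.le⟩
  have hderiv_eq (t : ℝ) (ht : 0 < t) : deriv (phi a b k p q l lam A F G) t
      = t ^ (l - 1) * psi a b k p q l lam A F G t := (hderiv t ht).deriv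
  have hpos (t : ℝ) (ht : 0 < t) (h : t < t₂) : 0 < deriv (phi a b k p q l lam A F G) t := by
    rw [hderiv_eq t ht]
    exact mul_pos (rpow_pos_of_pos ht _) (hψt₂ ▸ hanti ht ht₂ h)
  have hneg (t : ℝ) (h : t₂ < t) : deriv (phi a b k p q l lam A F G) t < 0 := by
    have ht := ht₂.trans h
    rw [hderiv_eq t ht]
    exact mul_neg_of_pos_of_neg (rpow_pos_of_pos ht _) (hψt₂ ▸ hanti ht₂ ht h)
  have hunique (t : ℝ) (ht : 0 < t) (h : deriv (phi a b k p q l lam A F G) t = 0) : t = t₂ := by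
    rw [hderiv_eq t ht, mul_eq_zero, or_iff_right (rpow_pos_of_pos ht _).ne'] at h
    exact hanti.injOn ht ht₂ (h.trans hψt₂.symm)
  exact ⟨t₂, ht₂, by rw [hderiv_eq t₂ ht₂, hψt₂, mul_zero], hunique, hpos, hneg,
    deriv_deriv_phi_neg ha.le hb hA hlamF hp hk1 hq0 hl hpl hql ht₂ hψt₂,
    isMaxOn_Ioi_of_deriv_pos_of_deriv_neg ht₂ (fun t ht => (hderiv t ht).differentiableAt)
      hpos hneg,
    phi_pos_of_psi_eq_zero ha.le hb hA hlamF hp hk1 hq0 hl hpl hql ht₂ hψt₂,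
    tendsto_phi_atTop hl0 hG hl hpl hql⟩
end

section
/- Let a, b > 0, k > 0, exponents 1 < q < p, l > p(k+1), and constants C_f, C_g > 0. Define λ₂ = ((p(k+1)−q)a/(C_g(l−q)))^{(p(k+1)−q)/(l−p(k+1))} · (l−p(k+1))a/((l−q)C_f), λ₃ = ((p−q)b/(C_g(l−q)))^{(p−q)/(l−p)} · (l−p)b/((l−q)C_f), and λ₁ = min{λ₂, λ₃}. Then for every λ with 0 < λ < λ₁ there exist no t > 0 and F, G ∈ ℝ satisfying simultaneously: F ≤ C_f·t^q, G ≤ C_g·t^l, a·t^{p(k+1)} + b·t^p = λF + G, and (p(k+1)−1)·a·t^{p(k+1)} + (p−1)·b·t^p = λ(q−1)·F + (l−1)·G. -/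
/-- real-variable content of Lemma 4.2: with
`λ₂ = ((p(k+1)−q)a/(C_g(l−q)))^{(p(k+1)−q)/(l−p(k+1))}·(l−p(k+1))a/((l−q)C_f)`,
`λ₃ = ((p−q)b/(C_g(l−q)))^{(p−q)/(l−p)}·(l−p)b/((l−q)C_f)` and
`λ₁ = min{λ₂, λ₃}`, for `0 < λ < λ₁` no `t > 0`, `F`, `G` can satisfy
simultaneously the two degenerate Nehari equations and the bounds
`F ≤ C_f t^q`, `G ≤ C_g t^l`. -/
theorem stmt_10 (a b k p q l Cf Cg lam₂ lam₃ lam₁ : ℝ)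
    (ha : 0 < a) (hb : 0 < b) (hk : 0 < k)
    (hq : 1 < q) (hqp : q < p) (hl : p * (k + 1) < l)
    (hCf : 0 < Cf) (hCg : 0 < Cg)
    (hlam₂ : lam₂ = ((p * (k + 1) - q) * a / (Cg * (l - q)))
        ^ ((p * (k + 1) - q) / (l - p * (k + 1)))
        * ((l - p * (k + 1)) * a / ((l - q) * Cf)))
    (hlam₃ : lam₃ = ((p - q) * b / (Cg * (l - q))) ^ ((p - q) / (l - p))
        * ((l - p) * b / ((l - q) * Cf)))
    (hlam₁ : lam₁ = min lam₂ lam₃) :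
    ∀ lam : ℝ, 0 < lam → lam < lam₁ →
      ¬ ∃ t F G : ℝ, 0 < t ∧ F ≤ Cf * t ^ q ∧ G ≤ Cg * t ^ l ∧
          a * t ^ (p * (k + 1)) + b * t ^ p = lam * F + G ∧
          (p * (k + 1) - 1) * a * t ^ (p * (k + 1)) + (p - 1) * b * t ^ p
            = lam * (q - 1) * F + (l - 1) * G := by
  intro lam hlam hlt
  rintro ⟨t, F, G, ht, hF, hG, h1, h2⟩
  set P := p * (k + 1) with hPdef
  have hp1 : (1:ℝ) < p := hq.trans hqp
  have hpP : p < P := by nlinarith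
  have hqP : q < P := hqp.trans hpP
  have hlq : (0:ℝ) < l - q := by linarith
  have hlP : (0:ℝ) < l - P := by linarith
  have hPq : (0:ℝ) < P - q := by linarith
  have hlp : (0:ℝ) < l - p := by linarith
  have hpq : (0:ℝ) < p - q := by linarith
  have htP : 0 < t ^ P := Real.rpow_pos_of_pos ht P
  have htp : 0 < t ^ p := Real.rpow_pos_of_pos ht p
  have htq : 0 < t ^ q := Real.rpow_pos_of_pos ht q
  have htl : 0 < t ^ l := Real.rpow_pos_of_pos ht l
  have hlamF : lam * F = a * t ^ P + b * t ^ p - G := by linarith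
  have key : (l - q) * G = (P - q) * (a * t ^ P) + (p - q) * (b * t ^ p) := by
    have e : lam * (q - 1) * F = (q - 1) * (lam * F) := by ring
    rw [e, hlamF] at h2
    linear_combination -h2
  have keyF : (l - q) * (lam * F) = (l - P) * (a * t ^ P) + (l - p) * (b * t ^ p) := by
    rw [hlamF]
    linear_combination -key
  -- first inequality: (P-q) a t^P ≤ (l-q) Cg t^l
  have h3 : (P - q) * (a * t ^ P) ≤ (l - q) * (Cg * t ^ l) := by
    have h := mul_le_mul_of_nonneg_left hG hlq.le
    have hBB := mul_pos hpq (mul_pos hb htp)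
    linarith [key, h, hBB]
  set c : ℝ := (P - q) * a / (Cg * (l - q)) with hcdef
  have hc : 0 < c := by positivity
  have htlP : c ≤ t ^ (l - P) := by
    have e1 : c * t ^ P * (Cg * (l - q)) = (P - q) * (a * t ^ P) := by
      rw [hcdef]; field_simp
    have e2 : t ^ (l - P) * t ^ P = t ^ l := by
      rw [← Real.rpow_add ht]; ring_nf
    have h4' : c * t ^ P * (Cg * (l - q)) ≤ (t ^ (l - P) * t ^ P) * (Cg * (l - q)) := by
      calc c * t ^ P * (Cg * (l - q)) = (P - q) * (a * t ^ P) := e1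
        _ ≤ (l - q) * (Cg * t ^ l) := h3
        _ = (t ^ (l - P) * t ^ P) * (Cg * (l - q)) := by rw [e2]; ring
    have h4 : c * t ^ P ≤ t ^ (l - P) * t ^ P :=
      le_of_mul_le_mul_right h4' (by positivity)
    exact le_of_mul_le_mul_right h4 htP
  -- second inequality
  have h4 : (l - P) * (a * t ^ P) ≤ (l - q) * Cf * (lam * t ^ q) := by
    have hlF : lam * F ≤ lam * (Cf * t ^ q) := mul_le_mul_of_nonneg_left hF hlam.le
    have hlF2 := mul_le_mul_of_nonneg_left hlF hlq.le
    have hBB := mul_pos hlp (mul_pos hb htp)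
    nlinarith [keyF, hlF2, hBB]
  have h5 : (l - P) * a * t ^ (P - q) ≤ (l - q) * Cf * lam := by
    have e1 : ((l - P) * a * t ^ (P - q)) * t ^ q = (l - P) * (a * t ^ P) := by
      rw [mul_assoc, mul_assoc, ← Real.rpow_add ht]
      ring_nf
    have e2 : ((l - q) * Cf * lam) * t ^ q = (l - q) * Cf * (lam * t ^ q) := by ring
    exact le_of_mul_le_mul_right (by rw [e1, e2]; exact h4) htq
  have hmono : c ^ ((P - q) / (l - P)) ≤ t ^ (P - q) := by
    have h6 : c ^ ((P - q) / (l - P)) ≤ (t ^ (l - P)) ^ ((P - q) / (l - P)) :=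
      Real.rpow_le_rpow hc.le htlP (by positivity)
    rwa [← Real.rpow_mul ht.le,
      show (l - P) * ((P - q) / (l - P)) = P - q by field_simp] at h6
  have hlam2le : lam₂ ≤ lam := by
    rw [hlam₂]
    calc c ^ ((P - q) / (l - P)) * ((l - P) * a / ((l - q) * Cf))
        ≤ t ^ (P - q) * ((l - P) * a / ((l - q) * Cf)) := by
          apply mul_le_mul_of_nonneg_right hmono (by positivity)
      _ ≤ lam := by
          rw [show t ^ (P - q) * ((l - P) * a / ((l - q) * Cf))
              = ((l - P) * a * t ^ (P - q)) / ((l - q) * Cf) by ring,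
            div_le_iff₀ (by positivity)]
          linarith [h5]
  have : lam₁ ≤ lam₂ := hlam₁ ▸ min_le_left _ _
  linarith
end

section
/- Let a, b > 0, k > 0, exponents 1 < q < p, l > p(k+1), and constants C_f, C_g > 0. Set t₀ = ((p−q)b/((l−q)C_g))^{1/(l−p)} and λ₃ = ((p−q)b/(C_g(l−q)))^{(p−q)/(l−p)} · (l−p)b/((l−q)C_f). Suppose 0 < λ < (q/p)·λ₃ and define δ₁ = t₀^q·((1/p − 1/l)·b·t₀^{p−q} − (1/q − 1/l)·λ·C_f). Then δ₁ > 0, and for every t ≥ t₀ and every F ≤ C_f·t^q one has (1/(p(k+1)) − 1/l)·a·t^{p(k+1)} + (1/p − 1/l)·b·t^p − (1/q − 1/l)·λ·F ≥ δ₁. -/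
/-- first lower-bound estimate in the proof of Lemma 4.3: with
`t₀ = ((p−q)b/((l−q)C_g))^{1/(l−p)}` and
`λ₃ = ((p−q)b/(C_g(l−q)))^{(p−q)/(l−p)}·(l−p)b/((l−q)C_f)`, if
`0 < λ < (q/p)·λ₃` and `δ₁ = t₀^q((1/p − 1/l)b t₀^{p−q} − (1/q − 1/l)λC_f)`,
then `δ₁ > 0` and for all `t ≥ t₀`, `F ≤ C_f t^q` the Euler-functional
expression is bounded below by `δ₁`. -/
theorem stmt_11 (a b k p q l Cf Cg lam t₀ lam₃ δ₁ : ℝ)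
    (ha : 0 < a) (hb : 0 < b) (hk : 0 < k)
    (hq : 1 < q) (hqp : q < p) (hl : p * (k + 1) < l)
    (hCf : 0 < Cf) (hCg : 0 < Cg)
    (ht₀ : t₀ = ((p - q) * b / ((l - q) * Cg)) ^ (1 / (l - p)))
    (hlam₃ : lam₃ = ((p - q) * b / (Cg * (l - q))) ^ ((p - q) / (l - p))
        * ((l - p) * b / ((l - q) * Cf)))
    (hlam : 0 < lam) (hlam' : lam < q / p * lam₃)
    (hδ₁ : δ₁ = t₀ ^ q * ((1 / p - 1 / l) * b * t₀ ^ (p - q)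
        - (1 / q - 1 / l) * lam * Cf)) :
    0 < δ₁ ∧ ∀ t F : ℝ, t₀ ≤ t → F ≤ Cf * t ^ q →
      δ₁ ≤ (1 / (p * (k + 1)) - 1 / l) * a * t ^ (p * (k + 1))
        + (1 / p - 1 / l) * b * t ^ p - (1 / q - 1 / l) * lam * F := by
  have hp1 : (1:ℝ) < p := hq.trans hqp
  have hp0 : (0:ℝ) < p := by linarith
  have hq0 : (0:ℝ) < q := by linarith
  have hpk : 0 < p * (k + 1) := by positivity
  have hpl : p < l := by nlinarith
  have hql : q < l := hqp.trans hpl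
  have hl0 : (0:ℝ) < l := by linarith
  have hpq : (0:ℝ) < p - q := by linarith
  have hlp : (0:ℝ) < l - p := by linarith
  have hlq : (0:ℝ) < l - q := by linarith
  set x : ℝ := (p - q) * b / ((l - q) * Cg) with hx
  have hx0 : 0 < x := by positivity
  have ht₀0 : 0 < t₀ := by rw [ht₀]; positivity
  have hkey : t₀ ^ (p - q) = x ^ ((p - q) / (l - p)) := by
    rw [ht₀, ← Real.rpow_mul hx0.le]
    congr 1
    field_simp
  have hT0 : 0 < t₀ ^ (p - q) := Real.rpow_pos_of_pos ht₀0 _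
  have hTq0 : 0 < t₀ ^ q := Real.rpow_pos_of_pos ht₀0 _
  have h1q1l : (0:ℝ) < 1 / q - 1 / l := by
    rw [sub_pos]
    exact one_div_lt_one_div_of_lt hq0 hql
  have h1p1l : (0:ℝ) < 1 / p - 1 / l := by
    rw [sub_pos]
    exact one_div_lt_one_div_of_lt hp0 hpl
  have h1pk1l : (0:ℝ) < 1 / (p * (k + 1)) - 1 / l := by
    rw [sub_pos]
    exact one_div_lt_one_div_of_lt hpk hl
  -- rewrite lam₃ in terms of t₀ ^ (p - q)
  have hxb : (p - q) * b / (Cg * (l - q)) = x := by rw [hx]; ring_nf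
  have h1 : lam₃ = t₀ ^ (p - q) * ((l - p) * b / ((l - q) * Cf)) := by
    rw [hlam₃, hxb, ← hkey]
  have hid : (1 / q - 1 / l) * (q / p * (t₀ ^ (p - q) * ((l - p) * b / ((l - q) * Cf)))) * Cf
      = (1 / p - 1 / l) * b * t₀ ^ (p - q) := by
    field_simp
  have hineq : (1 / q - 1 / l) * lam * Cf < (1 / p - 1 / l) * b * t₀ ^ (p - q) := by
    rw [← hid]
    have hcoef : 0 < (1 / q - 1 / l) * Cf := mul_pos h1q1l hCf
    rw [h1] at hlam'
    nlinarith
  have hinner : 0 < (1 / p - 1 / l) * b * t₀ ^ (p - q) - (1 / q - 1 / l) * lam * Cf := by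
    linarith
  have hδ₁pos : 0 < δ₁ := by
    rw [hδ₁]; exact mul_pos hTq0 hinner
  refine ⟨hδ₁pos, ?_⟩
  intro t F htt hF
  have ht0 : 0 < t := lt_of_lt_of_le ht₀0 htt
  have htq : t₀ ^ q ≤ t ^ q := Real.rpow_le_rpow ht₀0.le htt hq0.le
  have htpq : t₀ ^ (p - q) ≤ t ^ (p - q) := Real.rpow_le_rpow ht₀0.le htt hpq.le
  have htp : t ^ p = t ^ q * t ^ (p - q) := by
    rw [← Real.rpow_add ht0]
    congr 1
    ring
  have hApos : 0 ≤ (1 / (p * (k + 1)) - 1 / l) * a * t ^ (p * (k + 1)) := by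
    have := Real.rpow_pos_of_pos ht0 (p * (k + 1))
    positivity
  have hI : (1 / p - 1 / l) * b * t₀ ^ (p - q) - (1 / q - 1 / l) * lam * Cf
      ≤ (1 / p - 1 / l) * b * t ^ (p - q) - (1 / q - 1 / l) * lam * Cf := by
    have := mul_le_mul_of_nonneg_left htpq (le_of_lt (mul_pos h1p1l hb))
    rw [mul_assoc, mul_assoc] at this ⊢
    linarith
  have hprod : t₀ ^ q * ((1 / p - 1 / l) * b * t₀ ^ (p - q) - (1 / q - 1 / l) * lam * Cf)
      ≤ t ^ q * ((1 / p - 1 / l) * b * t ^ (p - q) - (1 / q - 1 / l) * lam * Cf) :=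
    mul_le_mul htq hI hinner.le (by positivity)
  have hC : (1 / q - 1 / l) * lam * F ≤ (1 / q - 1 / l) * lam * (Cf * t ^ q) := by
    have : 0 ≤ (1 / q - 1 / l) * lam := by positivity
    exact mul_le_mul_of_nonneg_left hF this
  have e2 : t ^ q * ((1 / p - 1 / l) * b * t ^ (p - q) - (1 / q - 1 / l) * lam * Cf)
      = (1 / p - 1 / l) * b * (t ^ q * t ^ (p - q)) - (1 / q - 1 / l) * lam * (Cf * t ^ q) := by
    ring
  rw [hδ₁, htp]
  linarith [hprod, hC, hApos, e2]
end

section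
/- Let a, b > 0, k > 0, exponents 1 < q < p, l > p(k+1), and constants C_f, C_g > 0. Set t₁ = ((p(k+1)−q)a/(C_g(l−q)))^{1/(l−p(k+1))} and λ₂ = ((p(k+1)−q)a/(C_g(l−q)))^{(p(k+1)−q)/(l−p(k+1))} · (l−p(k+1))a/((l−q)C_f). Suppose 0 < λ < (q/(p(k+1)))·λ₂ and define δ₁ = t₁^q·((1/(p(k+1)) − 1/l)·a·t₁^{p(k+1)−q} − (1/q − 1/l)·λ·C_f). Then δ₁ > 0, and for every t ≥ t₁ and every F ≤ C_f·t^q one has (1/(p(k+1)) − 1/l)·a·t^{p(k+1)} + (1/p − 1/l)·b·t^p − (1/q − 1/l)·λ·F ≥ δ₁. -/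
private lemma stmt12_alg (P q l a Cf T : ℝ) (hq0 : 0 < q) (hP0 : 0 < P) (hl0 : 0 < l)
    (hlq : q < l) (hCf : 0 < Cf) :
    (1 / q - 1 / l) * (q / P * (T * ((l - P) * a / ((l - q) * Cf)))) * Cf
      = (1 / P - 1 / l) * a * T := by
  have h1 : q ≠ 0 := ne_of_gt hq0
  have h2 : P ≠ 0 := ne_of_gt hP0
  have h3 : l ≠ 0 := ne_of_gt hl0
  have h4 : l - q ≠ 0 := by intro h; linarith [sub_eq_zero.mp h]
  have h5 : Cf ≠ 0 := ne_of_gt hCf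
  field_simp

/-- second lower-bound estimate in the proof of Lemma 4.3: with
`t₁ = ((p(k+1)−q)a/(C_g(l−q)))^{1/(l−p(k+1))}` and
`λ₂ = ((p(k+1)−q)a/(C_g(l−q)))^{(p(k+1)−q)/(l−p(k+1))}·(l−p(k+1))a/((l−q)C_f)`,
if `0 < λ < (q/(p(k+1)))·λ₂` and
`δ₁ = t₁^q((1/(p(k+1)) − 1/l)a t₁^{p(k+1)−q} − (1/q − 1/l)λC_f)`, then
`δ₁ > 0` and for all `t ≥ t₁`, `F ≤ C_f t^q` the Euler-functional expression
is bounded below by `δ₁`. -/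
theorem stmt_12 (a b k p q l Cf Cg lam t₁ lam₂ δ₁ : ℝ)
    (ha : 0 < a) (hb : 0 < b) (hk : 0 < k)
    (hq : 1 < q) (hqp : q < p) (hl : p * (k + 1) < l)
    (hCf : 0 < Cf) (hCg : 0 < Cg)
    (ht₁ : t₁ = ((p * (k + 1) - q) * a / (Cg * (l - q)))
        ^ (1 / (l - p * (k + 1))))
    (hlam₂ : lam₂ = ((p * (k + 1) - q) * a / (Cg * (l - q)))
        ^ ((p * (k + 1) - q) / (l - p * (k + 1)))
        * ((l - p * (k + 1)) * a / ((l - q) * Cf)))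
    (hlam : 0 < lam) (hlam' : lam < q / (p * (k + 1)) * lam₂)
    (hδ₁ : δ₁ = t₁ ^ q * ((1 / (p * (k + 1)) - 1 / l) * a * t₁ ^ (p * (k + 1) - q)
        - (1 / q - 1 / l) * lam * Cf)) :
    0 < δ₁ ∧ ∀ t F : ℝ, t₁ ≤ t → F ≤ Cf * t ^ q →
      δ₁ ≤ (1 / (p * (k + 1)) - 1 / l) * a * t ^ (p * (k + 1))
        + (1 / p - 1 / l) * b * t ^ p - (1 / q - 1 / l) * lam * F := by
  have hp0 : 0 < p := by linarith
  have hq0 : 0 < q := by linarith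
  have hP0 : 0 < p * (k + 1) := by nlinarith
  have hPp : p < p * (k + 1) := by nlinarith
  have hqP : q < p * (k + 1) := lt_trans hqp hPp
  have hql : q < l := lt_trans hqP hl
  have hl0 : 0 < l := lt_trans hP0 hl
  have hX : 0 < (p * (k + 1) - q) * a / (Cg * (l - q)) :=
    div_pos (mul_pos (by linarith) ha) (mul_pos hCg (by linarith))
  have ht₁pos : 0 < t₁ := ht₁ ▸ Real.rpow_pos_of_pos hX _
  have hT : t₁ ^ (p * (k + 1) - q)
      = ((p * (k + 1) - q) * a / (Cg * (l - q))) ^ ((p * (k + 1) - q) / (l - p * (k + 1))) := by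
    rw [ht₁, ← Real.rpow_mul hX.le]
    congr 1
    field_simp
  have hA : 0 < 1 / (p * (k + 1)) - 1 / l := by
    have : 1 / l < 1 / (p * (k + 1)) := one_div_lt_one_div_of_lt hP0 hl
    linarith
  have hB : 0 < 1 / q - 1 / l := by
    have : 1 / l < 1 / q := one_div_lt_one_div_of_lt hq0 hql
    linarith
  have hC : 0 ≤ 1 / p - 1 / l := by
    have : 1 / l < 1 / p := one_div_lt_one_div_of_lt hp0 (lt_trans hPp hl)
    linarith
  have hkey : (1 / q - 1 / l) * lam * Cf
      < (1 / (p * (k + 1)) - 1 / l) * a * t₁ ^ (p * (k + 1) - q) := by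
    have hlam₂' : lam₂ = t₁ ^ (p * (k + 1) - q) * ((l - p * (k + 1)) * a / ((l - q) * Cf)) := by
      rw [hlam₂, hT]
    have h1 : (1 / q - 1 / l) * (q / (p * (k + 1)) * lam₂) * Cf
        = (1 / (p * (k + 1)) - 1 / l) * a * t₁ ^ (p * (k + 1) - q) := by
      rw [hlam₂']
      exact stmt12_alg _ _ _ _ _ _ hq0 hP0 hl0 hql hCf
    have h2 : (1 / q - 1 / l) * lam * Cf < (1 / q - 1 / l) * (q / (p * (k + 1)) * lam₂) * Cf :=
      mul_lt_mul_of_pos_right (mul_lt_mul_of_pos_left hlam' hB) hCf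
    linarith
  have hδpos : 0 < δ₁ := by
    rw [hδ₁]
    exact mul_pos (Real.rpow_pos_of_pos ht₁pos _) (by linarith)
  refine ⟨hδpos, fun t F htt hF => ?_⟩
  have ht0 : 0 < t := lt_of_lt_of_le ht₁pos htt
  have htq : t₁ ^ q ≤ t ^ q := Real.rpow_le_rpow ht₁pos.le htt hq0.le
  have htPq : t₁ ^ (p * (k + 1) - q) ≤ t ^ (p * (k + 1) - q) :=
    Real.rpow_le_rpow ht₁pos.le htt (by linarith)
  have hAa : 0 ≤ (1 / (p * (k + 1)) - 1 / l) * a := (mul_pos hA ha).le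
  have hinner : (1 / (p * (k + 1)) - 1 / l) * a * t₁ ^ (p * (k + 1) - q)
      - (1 / q - 1 / l) * lam * Cf
      ≤ (1 / (p * (k + 1)) - 1 / l) * a * t ^ (p * (k + 1) - q)
      - (1 / q - 1 / l) * lam * Cf := by
    have := mul_le_mul_of_nonneg_left htPq hAa
    linarith [mul_le_mul_of_nonneg_left htPq hAa]
  have hψ : δ₁ ≤ t ^ q * ((1 / (p * (k + 1)) - 1 / l) * a * t ^ (p * (k + 1) - q)
      - (1 / q - 1 / l) * lam * Cf) := by
    rw [hδ₁]
    exact mul_le_mul htq hinner (by linarith) (Real.rpow_pos_of_pos ht0 _).le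
  have hsplit : t ^ (p * (k + 1)) = t ^ q * t ^ (p * (k + 1) - q) := by
    rw [← Real.rpow_add ht0]
    ring_nf
  have heq : t ^ q * ((1 / (p * (k + 1)) - 1 / l) * a * t ^ (p * (k + 1) - q)
      - (1 / q - 1 / l) * lam * Cf)
      = (1 / (p * (k + 1)) - 1 / l) * a * t ^ (p * (k + 1))
      - (1 / q - 1 / l) * lam * (Cf * t ^ q) := by
    rw [hsplit]; ring
  rw [heq] at hψ
  have hF' : (1 / q - 1 / l) * lam * F ≤ (1 / q - 1 / l) * lam * (Cf * t ^ q) :=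
    mul_le_mul_of_nonneg_left hF (mul_pos hB hlam).le
  have hbp : 0 ≤ (1 / p - 1 / l) * b * t ^ p :=
    mul_nonneg (mul_nonneg hC hb.le) (Real.rpow_pos_of_pos ht0 _).le
  linarith
end
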